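/- Let ρ ∈ Matrix (Fin d) (Fin d) ℂ be positive definite with trace 1, and let A be a measurement with n outcomes on ℂ^d all of whose effects are nonzero. Then A is informationally complete, i.e., Submodule.span ℂ (Set.range A) = ⊤ in Matrix (Fin d) (Fin d) ℂ, if and only if the d² × d² matrix F_ρ(A) is invertible (IsUnit (F_ρ(A))). -/

import Mathlib

open Matrix
open scoped Kronecker ComplexOrder

noncomputable section

/-- A measurement (POVM): a finite family of positive semidefinite matrices summing to `1`. -/
def IsMeasurement {ι κ : Type*} [Fintype ι] [DecidableEq ι] [Fintype κ]
    (A : κ → Matrix ι ι ℂ) : Prop :=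
  (∀ x, (A x).PosSemidef) ∧ ∑ x, A x = 1

/-- `A` is a post-processing of `B`: `A ⪯ B`. -/
def PostProc {ι : Type*} {n m : ℕ}
    (A : Fin n → Matrix ι ι ℂ) (B : Fin m → Matrix ι ι ℂ) : Prop :=
  ∃ μ : Fin n → Fin m → ℝ,
    (∀ x y, 0 ≤ μ x y) ∧ (∀ y, ∑ x, μ x y = 1) ∧
    (∀ x, A x = ∑ y, (μ x y : ℂ) • B y)

/-- The outer product `|E⟩⟨F|` of the vectorizations of two matrices. -/
def outerProd {ι : Type*} (E F : Matrix ι ι ℂ) : Matrix (ι × ι) (ι × ι) ℂ :=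
  Matrix.of fun p q => E p.1 p.2 * star (F q.1 q.2)

/-- The (un-normalized) Fisher information map of a measurement. -/
noncomputable def Fisher {ι κ : Type*} [Fintype ι] [Fintype κ]
    (A : κ → Matrix ι ι ℂ) : Matrix (ι × ι) (ι × ι) ℂ :=
  ∑ x, (Matrix.trace (A x))⁻¹ • outerProd (A x) (A x)

/-- The generalized Fisher information map of a measurement, relative to a
positive definite state `ρ` (with positive semidefinite square root `ρ^{1/2}`). -/
noncomputable def FisherRho {ι κ : Type*} [Fintype ι] [DecidableEq ι] [Fintype κ]
    {ρ : Matrix ι ι ℂ} (hρ : ρ.PosDef) (A : κ → Matrix ι ι ℂ) :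
    Matrix (ι × ι) (ι × ι) ℂ :=
  ∑ x, (Matrix.trace (ρ * A x))⁻¹ •
    outerProd ((hρ.posSemidef.1.eigenvectorUnitary : Matrix ι ι ℂ) *
        diagonal ((↑) ∘ Real.sqrt ∘ hρ.posSemidef.1.eigenvalues) *
        (star hρ.posSemidef.1.eigenvectorUnitary : Matrix ι ι ℂ) * A x)
      ((hρ.posSemidef.1.eigenvectorUnitary : Matrix ι ι ℂ) *
        diagonal ((↑) ∘ Real.sqrt ∘ hρ.posSemidef.1.eigenvalues) *
        (star hρ.posSemidef.1.eigenvectorUnitary : Matrix ι ι ℂ) * A x)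

/-- The height of a finite family of self-adjoint matrices: the infimum of the traces of
Hermitian matrices dominating every member in the Loewner order. -/
noncomputable def height {ι κ : Type*} [Fintype ι] [Fintype κ]
    (X : κ → Matrix ι ι ℂ) : ℝ :=
  sInf { t : ℝ | ∃ H : Matrix ι ι ℂ, H.IsHermitian ∧
    (∀ i, (H - X i).PosSemidef) ∧ t = (Matrix.trace H).re }

/-!
Write `S = ρ^{1/2}`, which is invertible, and `t x = tr (ρ A x)`, which is positive. Then
`F_ρ(A) = ∑ x, t x⁻¹ |S A x⟩⟨S A x| = W Wᴴ`, where the columns of `W` are the vectorizations of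
`t x^{-1/2} S A x`. Since `rank (W Wᴴ) = rank W`, the range of `F_ρ(A)` is the column span of `W`,
i.e. the image of `span (range A)` under the invertible map `X ↦ vec (S X)`.
-/

theorem Submodule.span_range_smul_of_isUnit {ι R M : Type*} [Semiring R] [AddCommMonoid M]
    [Module R M] {a : ι → R} (ha : ∀ i, IsUnit (a i)) (v : ι → M) :
    span R (Set.range fun i => a i • v i) = span R (Set.range v) := by
  simp only [span_range_eq_iSup, span_singleton_smul_eq (ha _)]

theorem Submodule.span_range_linearEquiv_comp_eq_top_iff {ι R M N : Type*} [Semiring R]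
    [AddCommMonoid M] [Module R M] [AddCommMonoid N] [Module R N] (e : M ≃ₗ[R] N) (v : ι → M) :
    span R (Set.range (e ∘ v)) = ⊤ ↔ span R (Set.range v) = ⊤ := by
  rw [Set.range_comp, ← LinearEquiv.coe_toLinearMap, span_image]
  exact Submodule.map_eq_top_iff

section GramMatrix

variable {m n R : Type*} [Fintype m] [Fintype n] [Field R] [PartialOrder R] [StarRing R]
  [StarOrderedRing R]

theorem Matrix.range_mulVecLin_self_mul_conjTranspose (A : Matrix m n R) :
    LinearMap.range (A * Aᴴ).mulVecLin = LinearMap.range A.mulVecLin := by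
  refine Submodule.eq_of_le_of_finrank_eq ?_ (rank_self_mul_conjTranspose A)
  rw [mulVecLin_mul]
  exact LinearMap.range_comp_le_range _ _

theorem Matrix.isUnit_self_mul_conjTranspose_iff [DecidableEq m] (A : Matrix m n R) :
    IsUnit (A * Aᴴ) ↔ Submodule.span R (Set.range A.col) = ⊤ := by
  rw [← mulVec_surjective_iff_isUnit, ← range_mulVecLin, ←
    range_mulVecLin_self_mul_conjTranspose, LinearMap.range_eq_top]
  rfl

theorem Matrix.isUnit_sum_vecMulVec_star_iff [DecidableEq m] (v : n → m → R) :
    IsUnit (∑ i, vecMulVec (v i) (star (v i))) ↔ Submodule.span R (Set.range v) = ⊤ := by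
  have h : ∑ i, vecMulVec (v i) (star (v i)) = (of v)ᵀ * (of v)ᵀᴴ := by
    ext p q
    simp [mul_apply, vecMulVec_apply, Matrix.sum_apply]
  rw [h, isUnit_self_mul_conjTranspose_iff]
  rfl

end GramMatrix

theorem Matrix.isUnit_sum_smul_vecMulVec_star_iff {m n 𝕜 : Type*} [Fintype m] [Fintype n]
    [DecidableEq m] [RCLike 𝕜] {c : n → 𝕜} (hc : ∀ i, 0 < c i) (v : n → m → 𝕜) :
    IsUnit (∑ i, c i • vecMulVec (v i) (star (v i))) ↔ Submodule.span 𝕜 (Set.range v) = ⊤ := by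
  choose r hr hrc using fun i => RCLike.pos_iff_exists_ofReal.1 (hc i)
  have h : ∀ i, c i • vecMulVec (v i) (star (v i)) =
      vecMulVec ((√(r i) : 𝕜) • v i) (star ((√(r i) : 𝕜) • v i)) := by
    intro i
    rw [star_smul, smul_vecMulVec, vecMulVec_smul, smul_smul, RCLike.star_def, RCLike.conj_ofReal,
      ← RCLike.ofReal_mul, Real.mul_self_sqrt (hr i).le, hrc]
  simp only [h, isUnit_sum_vecMulVec_star_iff]
  rw [Submodule.span_range_smul_of_isUnit fun i => ?_]
  simpa using Real.sqrt_ne_zero'.2 (hr i)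

section Sqrt

variable {n 𝕜 : Type*} [Fintype n] [DecidableEq n] [RCLike 𝕜] {ρ : Matrix n n 𝕜}

theorem Matrix.PosSemidef.cfc_sqrt_mul_self (hρ : ρ.PosSemidef) :
    cfc Real.sqrt ρ * cfc Real.sqrt ρ = ρ := by
  rw [← cfc_mul ..]
  refine (cfc_congr fun x hx => ?_).trans (cfc_id' ℝ ρ hρ.1)
  obtain ⟨i, rfl⟩ := hρ.1.spectrum_real_eq_range_eigenvalues ▸ hx
  exact Real.mul_self_sqrt (hρ.eigenvalues_nonneg i)

theorem Matrix.PosDef.isUnit_cfc_sqrt (hρ : ρ.PosDef) : IsUnit (cfc Real.sqrt ρ) := by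
  refine (isUnit_cfc_iff Real.sqrt ρ (by fun_prop) hρ.1).2 fun x hx => ?_
  obtain ⟨i, rfl⟩ := hρ.1.spectrum_real_eq_range_eigenvalues ▸ hx
  exact Real.sqrt_ne_zero'.2 (hρ.eigenvalues_pos i)

theorem Matrix.PosDef.trace_mul_pos (hρ : ρ.PosDef) {A : Matrix n n 𝕜} (hA : A.PosSemidef)
    (hA0 : A ≠ 0) : 0 < trace (ρ * A) := by
  set S := cfc Real.sqrt ρ
  have hS : Sᴴ = S := IsSelfAdjoint.cfc
  have hSu : IsUnit S := hρ.isUnit_cfc_sqrt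
  have hSAS : (Sᴴ * A * S).PosSemidef := hA.conjTranspose_mul_mul_same S
  have htr : trace (ρ * A) = trace (Sᴴ * A * S) := by
    rw [hS, ← hρ.posSemidef.cfc_sqrt_mul_self, mul_assoc, trace_mul_comm, mul_assoc]
  have hne : Sᴴ * A * S ≠ 0 := by
    rw [hS, Ne, hSu.mul_left_eq_zero, hSu.mul_right_eq_zero]
    exact hA0
  rw [htr]
  exact hSAS.trace_nonneg.lt_of_ne' (hSAS.trace_eq_zero_iff.not.2 hne)

end Sqrt

theorem fisherRho_eq_sum_smul_vecMulVec {ι κ : Type*} [Fintype ι] [DecidableEq ι] [Fintype κ]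
    {ρ : Matrix ι ι ℂ} (hρ : ρ.PosDef) (A : κ → Matrix ι ι ℂ) :
    FisherRho hρ A = ∑ x, (trace (ρ * A x))⁻¹ •
      vecMulVec (Function.uncurry (cfc Real.sqrt ρ * A x))
        (star (Function.uncurry (cfc Real.sqrt ρ * A x))) := by
  rw [hρ.1.cfc_eq, IsHermitian.cfc, Unitary.conjStarAlgAut_apply]
  rfl

theorem stmt12_general {d n : ℕ} {ρ : Matrix (Fin d) (Fin d) ℂ} (hρ : ρ.PosDef)
    (A : Fin n → Matrix (Fin d) (Fin d) ℂ) (hA : IsMeasurement A) (hA0 : ∀ x, A x ≠ 0) :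
    Submodule.span ℂ (Set.range A) = ⊤ ↔ IsUnit (FisherRho hρ A) := by
  let vecSqrtMul : Matrix (Fin d) (Fin d) ℂ ≃ₗ[ℂ] (Fin d × Fin d → ℂ) :=
    (hρ.isUnit_cfc_sqrt.unit.mulLeftLinearEquiv ℂ _).trans (LinearEquiv.curry ℂ ℂ _ _).symm
  rw [fisherRho_eq_sum_smul_vecMulVec, isUnit_sum_smul_vecMulVec_star_iff
    fun x => inv_pos.2 (hρ.trace_mul_pos (hA.1 x) (hA0 x))]
  exact (Submodule.span_range_linearEquiv_comp_eq_top_iff vecSqrtMul A).symm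

/-- A measurement is informationally complete iff its generalized Fisher information
matrix is invertible. -/
theorem stmt12 {d n : ℕ} {ρ : Matrix (Fin d) (Fin d) ℂ} (hρ : ρ.PosDef)
    (hρtr : Matrix.trace ρ = 1)
    (A : Fin n → Matrix (Fin d) (Fin d) ℂ) (hA : IsMeasurement A) (hA0 : ∀ x, A x ≠ 0) :
    Submodule.span ℂ (Set.range A) = ⊤ ↔ IsUnit (FisherRho hρ A) :=
  stmt12_general hρ A hA hA0
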